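/- Let f : {0,1}^n → {0,1} be a non-constant monotone function with critical probability p(f) (the unique p with E_p[f] = 1/2). If p ∈ [0,1] satisfies |E_p[f] − 1/2| ≤ ε for ε < 1/2, then |p − p(f)| ≤ 4ε/(1 − 4ε²). -/
import Mathlib


open Finset

/-- Flip coordinate `i` of `x`. -/
def flipAt {n : ℕ} (x : Fin n → Bool) (i : Fin n) : Fin n → Bool :=
  Function.update x i (!x i)

/-- The `p`-biased weight (probability) of the point `x` in the product distribution
where each bit is `1` independently with probability `p`. -/
noncomputable def w {n : ℕ} (p : ℝ) (x : Fin n → Bool) : ℝ :=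
  ∏ i, if x i then p else 1 - p

/-- The `p`-biased expectation of `f`. -/
noncomputable def Ep {n : ℕ} (p : ℝ) (f : (Fin n → Bool) → Bool) : ℝ :=
  ∑ x, w p x * (if f x then 1 else 0)

/-- The `p`-biased flip influence of coordinate `i` on `f`:
`Pr_{x ∼ {0,1}^n_p}[f(x) ≠ f(x^{⊕i})]`. -/
noncomputable def flipInf {n : ℕ} (i : Fin n) (p : ℝ) (f : (Fin n → Bool) → Bool) : ℝ :=
  ∑ x, w p x * (if f (flipAt x i) ≠ f x then 1 else 0)

/-- The `p`-biased rerandomized influence of coordinate `i` on `f`: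
`2·Pr[f(x) ≠ f(x^{∼i})]`, where `x^{∼i}` has coordinate `i` resampled `p`-biased. -/
noncomputable def rerandInf {n : ℕ} (i : Fin n) (p : ℝ) (f : (Fin n → Bool) → Bool) : ℝ :=
  2 * ∑ x, ∑ b : Bool, w p x * (if b then p else 1 - p) *
    (if f (Function.update x i b) ≠ f x then 1 else 0)

/-- The `p`-biased variance of `f`. -/
noncomputable def Varp {n : ℕ} (p : ℝ) (f : (Fin n → Bool) → Bool) : ℝ :=
  Ep p f * (1 - Ep p f)

/-- The restriction of `f` fixing coordinate `i` to the bit `b`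
(viewed as a function on the full cube that ignores coordinate `i`). -/
def restrict {n : ℕ} (f : (Fin n → Bool) → Bool) (i : Fin n) (b : Bool) :
    (Fin n → Bool) → Bool :=
  fun x => f (Function.update x i b)

lemma sum_pi_succ {n : ℕ} (g : (Fin (n+1) → Bool) → ℝ) :
    ∑ x : Fin (n+1) → Bool, g x = ∑ b : Bool, ∑ x : Fin n → Bool, g (Fin.cons b x) := by
  have h := Fintype.sum_equiv (Fin.consEquiv (fun _ => Bool))
    (fun bx : Bool × (Fin n → Bool) => g (Fin.cons bx.1 bx.2)) g (fun ⟨b, x⟩ => rfl)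
  rw [← h, Fintype.sum_prod_type]

lemma w_cons {n : ℕ} (p : ℝ) (b : Bool) (x : Fin n → Bool) :
    w p (Fin.cons b x) = (if b then p else 1 - p) * w p x := by
  simp [w, Fin.prod_univ_succ]

lemma Ep_succ {n : ℕ} (p : ℝ) (f : (Fin (n+1) → Bool) → Bool) :
    Ep p f = (1 - p) * Ep p (fun x => f (Fin.cons false x))
      + p * Ep p (fun x => f (Fin.cons true x)) := by
  rw [Ep, sum_pi_succ, Fintype.sum_bool]
  simp only [w_cons, if_true, Bool.false_eq_true, if_false]
  rw [Ep, Ep, Finset.mul_sum, Finset.mul_sum, add_comm]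
  congr 1 <;> exact Finset.sum_congr rfl fun x _ => by ring

lemma Ep_zero (p : ℝ) (f : (Fin 0 → Bool) → Bool) :
    Ep p f = if f (fun i => i.elim0) then 1 else 0 := by
  rw [Ep]
  rw [Fintype.sum_unique]
  simp [w]
  congr

lemma w_nonneg {n : ℕ} {p : ℝ} (h0 : 0 ≤ p) (h1 : p ≤ 1) (x : Fin n → Bool) :
    0 ≤ w p x :=
  Finset.prod_nonneg fun i _ => by split <;> linarith

lemma sum_w (n : ℕ) (p : ℝ) : ∑ x : Fin n → Bool, w p x = 1 := by
  induction n with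
  | zero => rw [Fintype.sum_unique]; simp [w]
  | succ n ih =>
      rw [sum_pi_succ, Fintype.sum_bool]
      simp only [w_cons, if_true, Bool.false_eq_true, if_false, ← Finset.mul_sum, ih]
      ring

lemma Ep_nonneg {n : ℕ} {p : ℝ} (h0 : 0 ≤ p) (h1 : p ≤ 1) (f : (Fin n → Bool) → Bool) :
    0 ≤ Ep p f :=
  Finset.sum_nonneg fun x _ => mul_nonneg (w_nonneg h0 h1 x) (by split <;> norm_num)

lemma Ep_le_one {n : ℕ} {p : ℝ} (h0 : 0 ≤ p) (h1 : p ≤ 1) (f : (Fin n → Bool) → Bool) :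
    Ep p f ≤ 1 := by
  rw [← sum_w n p]
  apply Finset.sum_le_sum
  intro x _
  have := w_nonneg h0 h1 x
  split <;> simp <;> linarith

lemma Ep_mono_f {n : ℕ} {p : ℝ} (h0 : 0 ≤ p) (h1 : p ≤ 1)
    {f g : (Fin n → Bool) → Bool} (h : ∀ x, f x ≤ g x) : Ep p f ≤ Ep p g := by
  apply Finset.sum_le_sum
  intro x _
  apply mul_le_mul_of_nonneg_left _ (w_nonneg h0 h1 x)
  have hx := h x
  cases hf : f x <;> cases hg : g x <;> rw [hf, hg] at hx <;>
    first
    | exact absurd hx (by decide)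
    | norm_num

lemma key : ∀ {n : ℕ} (f : (Fin n → Bool) → Bool),
    (∀ x y : Fin n → Bool, (∀ j, x j ≤ y j) → f x ≤ f y) →
    ∀ {p q : ℝ}, 0 ≤ q → q ≤ p → p ≤ 1 →
    (p - q) * Ep p f * (1 - Ep q f) ≤ Ep p f - Ep q f := by
  intro n
  induction n with
  | zero =>
      intro f _ p q hq hqp hp
      rw [Ep_zero, Ep_zero]
      split <;> norm_num <;> nlinarith
  | succ n ih =>
      intro f hmono p q hq hqp hp
      set f0 : (Fin n → Bool) → Bool := fun x => f (Fin.cons false x) with hf0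
      set f1 : (Fin n → Bool) → Bool := fun x => f (Fin.cons true x) with hf1
      have hm0 : ∀ x y : Fin n → Bool, (∀ j, x j ≤ y j) → f0 x ≤ f0 y := by
        intro x y hxy
        apply hmono
        intro j
        refine Fin.cases ?_ ?_ j <;> simp [hxy]
      have hm1 : ∀ x y : Fin n → Bool, (∀ j, x j ≤ y j) → f1 x ≤ f1 y := by
        intro x y hxy
        apply hmono
        intro j
        refine Fin.cases ?_ ?_ j <;> simp [hxy]
      have h01 : ∀ x, f0 x ≤ f1 x := by
        intro x
        apply hmono
        intro j
        refine Fin.cases ?_ ?_ j <;> simp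
      have hq1 : q ≤ 1 := le_trans hqp hp
      have hp0 : 0 ≤ p := le_trans hq hqp
      have IH0 := ih f0 hm0 hq hqp hp
      have IH1 := ih f1 hm1 hq hqp hp
      have hba : Ep p f0 ≤ Ep p f1 := Ep_mono_f hp0 hp h01
      have hba' : Ep q f0 ≤ Ep q f1 := Ep_mono_f hq hq1 h01
      have b0 : 0 ≤ Ep p f0 := Ep_nonneg hp0 hp f0
      have a1 : Ep p f1 ≤ 1 := Ep_le_one hp0 hp f1
      have b0' : 0 ≤ Ep q f0 := Ep_nonneg hq hq1 f0
      have a1' : Ep q f1 ≤ 1 := Ep_le_one hq hq1 f1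
      rw [Ep_succ p f, Ep_succ q f]
      set a := Ep p f1
      set b := Ep p f0
      set a' := Ep q f1
      set b' := Ep q f0
      -- goal : (p-q) * ((1-p)*b + p*a) * (1 - ((1-q)*b' + q*a')) ≤ ((1-p)*b + p*a) - ((1-q)*b' + q*a')
      have key1 : q * (a - a') + (1 - q) * (b - b') ≥
          (p - q) * (q * a * (1 - a') + (1 - q) * b * (1 - b')) := by
        nlinarith [IH0, IH1]
      have hQ0 : 0 ≤ (1 - q) * b' + q * a' := by nlinarith
      have hQ1 : (1 - q) * b' + q * a' ≤ 1 := by nlinarith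
      have e1 : (p - q) * (1 - ((1 - q) * b' + q * a')) ≤ 1 - q := by
        nlinarith [mul_nonneg (by linarith : (0:ℝ) ≤ 1 - p) (by linarith : (0:ℝ) ≤ 1 - ((1 - q) * b' + q * a')), mul_nonneg (by linarith : (0:ℝ) ≤ 1 - q) hQ0]
      have e2 : q * (1 - q) * (a' - b') ≤ q := by
        nlinarith [mul_nonneg hq (by nlinarith : (0:ℝ) ≤ 1 - (1 - q) * (a' - b'))]
      have key2 : (a - b) * (1 - (p - q) * (1 - ((1 - q) * b' + q * a'))
          - q * (1 - q) * (a' - b')) ≥ 0 := by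
        apply mul_nonneg (by linarith) (by linarith)
      nlinarith [key1, key2]

/-- If `f` is non-constant monotone with critical probability `pf`
(`E_{pf}[f] = 1/2`), and `p ∈ [0,1]` satisfies `|E_p[f] − 1/2| ≤ ε` for `ε < 1/2`,
then `|p − pf| ≤ 4ε/(1 − 4ε²)`. -/
theorem approx_critical_prob {n : ℕ} (f : (Fin n → Bool) → Bool)
    (hmono : ∀ x y : Fin n → Bool, (∀ j, x j ≤ y j) → f x ≤ f y)
    (hnc : ∃ x y, f x ≠ f y)
    (pf : ℝ) (hpf : pf ∈ Set.Icc (0 : ℝ) 1) (hcrit : Ep pf f = 1 / 2)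
    (p : ℝ) (hp : p ∈ Set.Icc (0 : ℝ) 1)
    (ε : ℝ) (hε0 : 0 ≤ ε) (hε : ε < 1 / 2)
    (happrox : |Ep p f - 1 / 2| ≤ ε) :
    |p - pf| ≤ 4 * ε / (1 - 4 * ε ^ 2) := by
  have hden : 0 < 1 - 4 * ε ^ 2 := by nlinarith
  rw [abs_le] at happrox
  have main : |p - pf| ≤ 4 * ε := by
    rcases le_total pf p with h | h
    · have hk := key f hmono hpf.1 h hp.2
      rw [hcrit] at hk
      have hE0 : 0 ≤ Ep p f := Ep_nonneg hp.1 hp.2 f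
      have hprod : 0 ≤ (p - pf) * Ep p f := mul_nonneg (by linarith) hE0
      have hhalf : 1 / 2 ≤ Ep p f := by nlinarith
      rw [abs_le]
      constructor
      · linarith
      · nlinarith [mul_nonneg (sub_nonneg.2 h) (sub_nonneg.2 hhalf)]
    · have hk := key f hmono hp.1 h hpf.2
      rw [hcrit] at hk
      have hE1 : Ep p f ≤ 1 := Ep_le_one hp.1 hp.2 f
      have hprod : 0 ≤ (pf - p) * (1 - Ep p f) := mul_nonneg (by linarith) (by linarith)
      have hhalf : Ep p f ≤ 1 / 2 := by nlinarith
      rw [abs_le]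
      constructor
      · nlinarith [mul_nonneg (sub_nonneg.2 h) (by linarith : (0:ℝ) ≤ 1 / 2 - Ep p f + 1 / 2)]
      · linarith
  calc |p - pf| ≤ 4 * ε := main
    _ ≤ 4 * ε / (1 - 4 * ε ^ 2) := by
        rw [le_div_iff₀ hden]
        nlinarith
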